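/- arXiv:1512.02157 — 4 statements merged into one kernel-verified Lean document; each statement's English description precedes it below -/
import Mathlib

section
/- In a directed graph with nonnegative edge weights, if there are k simple shortest paths from x to y (i.e., the k smallest-weight simple x-y paths), all of which share the same first edge (x,a), then for each i with 1 ≤ i ≤ k, the weight of the i-th simple shortest path from x to y equals wt(x,a) plus the weight of the i-th simple shortest path from a to y. -/
/-- Weight of a path given as a list of vertices: sum of edge weights of consecutive pairs. -/
def pathWt {α : Type*} {M : Type*} [AddCommMonoid M] (w : α → α → M) (p : List α) : M :=
  ((p.zip p.tail).map fun e => w e.1 e.2).sum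

/-- `p` is a simple path from `u` to `v` in the directed graph with adjacency `Adj`. -/
def IsSimplePath {α : Type*} (Adj : α → α → Prop) (u v : α) (p : List α) : Prop :=
  p.Chain' Adj ∧ p.head? = some u ∧ p.getLast? = some v ∧ p.Nodup

/-- `p` is a simple cycle through `x` (written `x :: ... :: x`). -/
def IsSimpleCycleThrough {α : Type*} (Adj : α → α → Prop) (x : α) (p : List α) : Prop :=
  p.Chain' Adj ∧ p.head? = some x ∧ p.getLast? = some x ∧ 2 ≤ p.length ∧ p.dropLast.Nodup

/-- `f` enumerates the `k` smallest-weight elements of the set `S` of paths,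
in nondecreasing order of weight. -/
def KSmallestIn {α M : Type*} [AddCommMonoid M] [Preorder M]
    (w : α → α → M) (S : Set (List α)) {k : ℕ} (f : Fin k → List α) : Prop :=
  (∀ i, f i ∈ S) ∧ Function.Injective f ∧
  (Monotone fun i => pathWt w (f i)) ∧
  (∀ p ∈ S, p ∉ Set.range f → ∀ i, pathWt w (f i) ≤ pathWt w p)

lemma pathWt_cons2 {α : Type*} (w : α → α → ℝ) (b c : α) (l : List α) :
    pathWt w (b :: c :: l) = w b c + pathWt w (c :: l) := by
  simp [pathWt]

lemma pathWt_cons' {α : Type*} (w : α → α → ℝ) (b : α) {l : List α} {c : α}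
    (hl : l.head? = some c) : pathWt w (b :: l) = w b c + pathWt w l := by
  cases l with
  | nil => simp at hl
  | cons h t => simp at hl; subst hl; exact pathWt_cons2 w b h t

lemma pathWt_le_cons {α : Type*} (w : α → α → ℝ) (hw : ∀ u v, 0 ≤ w u v)
    (b : α) (l : List α) : pathWt w l ≤ pathWt w (b :: l) := by
  cases l with
  | nil => simp [pathWt]
  | cons c t =>
      rw [pathWt_cons2]
      have := hw b c
      linarith

lemma pathWt_suffix_le {α : Type*} (w : α → α → ℝ) (hw : ∀ u v, 0 ≤ w u v)
    (s : List α) (x : α) (t : List α) :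
    pathWt w (x :: t) ≤ pathWt w (s ++ x :: t) := by
  induction s with
  | nil => simp
  | cons b s ih => exact le_trans ih (pathWt_le_cons w hw b _)

/-- Key counting lemma: the `i`-th smallest is at most `c` if there are `i+1`
distinct members of `S` of weight at most `c`. -/
lemma ksmall_le {α : Type*} (w : α → α → ℝ) (S : Set (List α)) {k : ℕ}
    {f : Fin k → List α} (hf : KSmallestIn w S f) (i : Fin k)
    (g : Fin ((i : ℕ) + 1) → List α) (hgS : ∀ j, g j ∈ S) (hginj : Function.Injective g)
    (c : ℝ) (hgc : ∀ j, pathWt w (g j) ≤ c) : pathWt w (f i) ≤ c := by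
  by_cases h : ∀ j, g j ∈ Set.range f
  · choose m hm using h
    have hminj : Function.Injective m := fun a b hab => hginj (by rw [← hm, ← hm, hab])
    have hex : ∃ j, (i : ℕ) ≤ (m j : ℕ) := by
      by_contra hc
      push_neg at hc
      have hinj' : Function.Injective (fun j => (⟨(m j : ℕ), hc j⟩ : Fin i)) := by
        intro a b hab
        apply hminj
        have : ((⟨(m a : ℕ), hc a⟩ : Fin i) : ℕ) = ((⟨(m b : ℕ), hc b⟩ : Fin i) : ℕ) :=
          congrArg Fin.val hab
        exact Fin.ext this
      have := Fintype.card_le_of_injective _ hinj'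
      simp at this
    obtain ⟨j, hj⟩ := hex
    calc pathWt w (f i) ≤ pathWt w (f (m j)) := hf.2.2.1 hj
      _ = pathWt w (g j) := by rw [hm]
      _ ≤ c := hgc j
  · push_neg at h
    obtain ⟨j, hj⟩ := h
    exact le_trans (hf.2.2.2 (g j) (hgS j) hj i) (hgc j)

/-- If the `k` simple shortest paths from `x` to `y` all share the same first edge `(x,a)`,
then the weight of the `i`-th simple shortest path from `x` to `y` equals `w x a` plus the
weight of the `i`-th simple shortest path from `a` to `y`. -/
theorem stmt0 {V : Type*} [Fintype V] [DecidableEq V]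
    (Adj : V → V → Prop) (w : V → V → ℝ) (hw : ∀ u v, 0 ≤ w u v)
    (x y a : V) (hxy : x ≠ y) (hxa : Adj x a) (k : ℕ)
    (P : Fin k → List V) (Q : Fin k → List V)
    (hP : KSmallestIn w {p | IsSimplePath Adj x y p} P)
    (hQ : KSmallestIn w {p | IsSimplePath Adj a y p} Q)
    (hfirst : ∀ i, (P i).tail.head? = some a) :
    ∀ i, pathWt w (P i) = w x a + pathWt w (Q i) := by
  intro i
  -- Basic structure of each P m : P m = x :: (P m).tail, tail nonempty with head a
  have hPdec : ∀ m : Fin k, P m = x :: (P m).tail := by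
    intro m
    obtain ⟨hc, hh, -, -⟩ := hP.1 m
    cases hPm : P m with
    | nil => rw [hPm] at hh; simp at hh
    | cons h t => rw [hPm] at hh; simp at hh; simp [hh]
  have hxna : x ≠ a := by
    intro hxaeq
    have h1 := hfirst i
    have h2 := hPdec i
    obtain ⟨-, -, -, hnd⟩ := hP.1 i
    rw [h2] at hnd
    cases ht : (P i).tail with
    | nil => rw [ht] at h1; simp at h1
    | cons b t =>
        rw [ht] at h1 hnd
        simp at h1
        subst h1
        rw [← hxaeq] at hnd
        simp at hnd
  -- the tail of P m is a simple a-y path, with weight pathWt (P m) - w x a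
  have hPtail : ∀ m : Fin k, IsSimplePath Adj a y (P m).tail := by
    intro m
    obtain ⟨hc, hh, hl, hnd⟩ := hP.1 m
    refine ⟨hc.tail, hfirst m, ?_, hnd.sublist (List.tail_sublist _)⟩
    have hne : (P m).tail ≠ [] := by
      intro h0
      have h1 := hfirst m
      rw [h0] at h1
      simp at h1
    rw [hPdec m] at hl
    cases ht : (P m).tail with
    | nil => exact absurd ht hne
    | cons b t => rw [ht] at hl; rwa [List.getLast?_cons_cons] at hl
  have hPwt : ∀ m : Fin k, pathWt w (P m) = w x a + pathWt w ((P m).tail) := by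
    intro m
    conv_lhs => rw [hPdec m]
    exact pathWt_cons' w x (hfirst m)
  -- the head of Q m is a
  have hQdec : ∀ m : Fin k, Q m = a :: (Q m).tail := by
    intro m
    obtain ⟨hc, hh, -, -⟩ := hQ.1 m
    cases hQm : Q m with
    | nil => rw [hQm] at hh; simp at hh
    | cons h t => rw [hQm] at hh; simp at hh; simp [hh]
  -- embedding Fin (i+1) → Fin k
  let e : Fin ((i : ℕ) + 1) → Fin k := fun j => ⟨(j : ℕ), lt_of_le_of_lt (Nat.lt_succ_iff.mp j.2) i.2⟩
  have he_le : ∀ j, e j ≤ i := fun j => Nat.lt_succ_iff.mp j.2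
  have he_inj : Function.Injective e := by
    intro a b hab
    have : ((e a : Fin k) : ℕ) = ((e b : Fin k) : ℕ) := congrArg Fin.val hab
    exact Fin.ext this
  -- Direction 1 : w x a + pathWt (Q i) ≤ pathWt (P i)
  have dir1 : pathWt w (Q i) ≤ pathWt w (P i) - w x a := by
    apply ksmall_le w _ hQ i (fun j => (P (e j)).tail)
    · exact fun j => hPtail (e j)
    · intro j1 j2 h12
      have h12' : (P (e j1)).tail = (P (e j2)).tail := h12
      apply he_inj
      apply hP.2.1
      rw [hPdec (e j1), hPdec (e j2), h12']
    · intro j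
      have h1 : pathWt w (P (e j)) ≤ pathWt w (P i) := hP.2.2.1 (he_le j)
      have h2 := hPwt (e j)
      linarith
  -- Direction 2 : pathWt (P i) ≤ w x a + pathWt (Q i)
  have dir2 : pathWt w (P i) ≤ w x a + pathWt w (Q i) := by
    by_cases hx : ∃ j : Fin ((i : ℕ) + 1), x ∈ Q (e j)
    · -- some Q j contains x: its suffix from x is a simple x-y path not starting with edge (x,a)
      obtain ⟨j, hxj⟩ := hx
      obtain ⟨s, t, hst⟩ := List.append_of_mem hxj
      obtain ⟨hc, hh, hl, hnd⟩ := hQ.1 (e j)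
      have hrS : IsSimplePath Adj x y (x :: t) := by
        refine ⟨hc.suffix ⟨s, hst.symm⟩, by simp, ?_, hnd.sublist ?_⟩
        · rw [hst] at hl; rwa [List.getLast?_append_cons] at hl
        · rw [hst]; exact (List.sublist_append_right s _)
      have hsne : s ≠ [] := by
        intro h0
        rw [h0] at hst
        rw [hst] at hh
        simp at hh
        first
          | exact hxna hh
          | exact hxna hh.symm
      have htha : t.head? ≠ some a := by
        intro hta
        have hat : a ∈ t := List.mem_of_mem_head? hta
        have has : a ∈ s := by
          cases s with
          | nil => exact absurd rfl hsne
          | cons b s' =>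
              rw [hst] at hh; simp at hh; subst hh; simp
        rw [hst] at hnd
        have := (List.nodup_append'.mp hnd).2.2
        exact this has (by simp [hat])
      have hrnotin : (x :: t) ∉ Set.range P := by
        rintro ⟨m, hm⟩
        have hfm := hfirst m
        rw [hm] at hfm
        simp at hfm
        exact htha hfm
      have h1 : pathWt w (P i) ≤ pathWt w (x :: t) := hP.2.2.2 _ hrS hrnotin i
      have h2 : pathWt w (x :: t) ≤ pathWt w (Q (e j)) := by
        rw [hst]; exact pathWt_suffix_le w hw s x t
      have h3 : pathWt w (Q (e j)) ≤ pathWt w (Q i) := hQ.2.2.1 (he_le j)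
      have := hw x a
      linarith
    · -- no Q j contains x : x :: Q j are distinct simple x-y paths
      push_neg at hx
      apply ksmall_le w _ hP i (fun j => x :: Q (e j))
      · intro j
        obtain ⟨hc, hh, hl, hnd⟩ := hQ.1 (e j)
        refine ⟨?_, by simp, ?_, by simp [hx j, hnd]⟩
        · rw [hQdec (e j)]
          exact List.IsChain.cons_cons hxa (by rw [← hQdec (e j)]; exact hc)
        · rw [hQdec (e j), List.getLast?_cons_cons, ← hQdec (e j)]
          exact hl
      · intro j1 j2 h12
        simp at h12
        exact he_inj (hQ.2.1 h12)
      · intro j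
        have h1 : pathWt w (x :: Q (e j)) = w x a + pathWt w (Q (e j)) := by
          apply pathWt_cons'
          rw [hQdec (e j)]; simp
        have h2 : pathWt w (Q (e j)) ≤ pathWt w (Q i) := hQ.2.2.1 (he_le j)
        linarith
  linarith
end

section
/- Let G be a directed graph with nonnegative edge weights, fix x ∈ V, and fix an integer k ≥ 3. Construct G' from G by adding 2(k−1) new vertices d_1,…,d_{k−1}, e_1,…,e_{k−1}, and for each 1 ≤ i ≤ k−1 add edges (x,d_i), (d_i,e_i), (e_i,x) each of weight 0. Suppose G contains at least one cycle. Then the k−1 smallest-weight simple cycles in G' are exactly the k−1 triangles x→d_i→e_i→x (each of weight 0), and the weight of the k-th simple shortest cycle in G' equals the weight of a minimum-weight simple cycle in G. -/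
/-- Canonical representative of a simple cycle: the rotation anchored at its minimum vertex
(cycles are considered up to cyclic rotation). -/
def IsCanonCycle {α : Type*} [LinearOrder α] (Adj : α → α → Prop) (p : List α) : Prop :=
  ∃ v, IsSimpleCycleThrough Adj v p ∧ ∀ u ∈ p, v ≤ u

/-- Adjacency of `G'`: `G` together with new vertices `d_i = Sum.inr (Sum.inl i)`,
`e_i = Sum.inr (Sum.inr i)` and zero-weight edges `(x,d_i)`, `(d_i,e_i)`, `(e_i,x)`. -/
def adj7 {V : Type*} (Adj : V → V → Prop) (x : V) (k : ℕ) :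
    (V ⊕ (Fin (k-1) ⊕ Fin (k-1))) → (V ⊕ (Fin (k-1) ⊕ Fin (k-1))) → Prop
  | Sum.inl u, Sum.inl v => Adj u v
  | Sum.inl u, Sum.inr (Sum.inl _) => u = x
  | Sum.inr (Sum.inl i), Sum.inr (Sum.inr j) => i = j
  | Sum.inr (Sum.inr _), Sum.inl v => v = x
  | _, _ => False

/-- Weights of `G'`: inherited on `G`, `0` on the new edges. -/
def wt7 {V : Type*} (w : V → V → ℝ) (k : ℕ) :
    (V ⊕ (Fin (k-1) ⊕ Fin (k-1))) → (V ⊕ (Fin (k-1) ⊕ Fin (k-1))) → ℝ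
  | Sum.inl u, Sum.inl v => w u v
  | _, _ => 0

namespace CycAux
variable {α : Type*} {Adj : α → α → Prop} {w : α → α → ℝ}

def mkCyc (l : List α) : List α := l ++ l.take 1

def CycOK (Adj : α → α → Prop) (l : List α) : Prop :=
  l ≠ [] ∧ l.Nodup ∧ List.Chain' Adj (mkCyc l)

theorem mkCyc_cons (a : α) (t : List α) : mkCyc (a :: t) = a :: (t ++ [a]) := by
  simp [mkCyc]

theorem mkCyc_dropLast {l : List α} (h : l ≠ []) : (mkCyc l).dropLast = l := by
  obtain ⟨a, t, rfl⟩ := List.exists_cons_of_ne_nil h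
  rw [mkCyc_cons]
  rw [show a :: (t ++ [a]) = (a :: t) ++ [a] by simp, List.dropLast_concat]

theorem mkCyc_head? {l : List α} (h : l ≠ []) : (mkCyc l).head? = l.head? := by
  obtain ⟨a, t, rfl⟩ := List.exists_cons_of_ne_nil h
  rw [mkCyc_cons]; rfl

theorem mkCyc_getLast? {l : List α} (h : l ≠ []) : (mkCyc l).getLast? = l.head? := by
  obtain ⟨a, t, rfl⟩ := List.exists_cons_of_ne_nil h
  rw [mkCyc_cons, show a :: (t ++ [a]) = (a :: t) ++ [a] by simp, List.getLast?_append]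
  rfl

theorem mkCyc_length {l : List α} (h : l ≠ []) : (mkCyc l).length = l.length + 1 := by
  obtain ⟨a, t, rfl⟩ := List.exists_cons_of_ne_nil h
  simp [mkCyc]

theorem mem_mkCyc {l : List α} (h : l ≠ []) {u : α} : u ∈ mkCyc l ↔ u ∈ l := by
  obtain ⟨a, t, rfl⟩ := List.exists_cons_of_ne_nil h
  rw [mkCyc_cons]; simp; tauto

/-- from cycle data to IsSimpleCycleThrough -/
theorem isCycle_mkCyc {l : List α} (h : CycOK Adj l) {v : α} (hv : l.head? = some v) :
    IsSimpleCycleThrough Adj v (mkCyc l) := by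
  obtain ⟨hne, hnd, hch⟩ := h
  refine ⟨hch, by rw [mkCyc_head? hne, hv], by rw [mkCyc_getLast? hne, hv], ?_, ?_⟩
  · rw [mkCyc_length hne]; have := List.length_pos_iff.2 hne; omega
  · rw [mkCyc_dropLast hne]; exact hnd

/-- from IsSimpleCycleThrough to cycle data -/
theorem cycle_eq_mkCyc {p : List α} {v : α} (h : IsSimpleCycleThrough Adj v p) :
    CycOK Adj p.dropLast ∧ p.dropLast.head? = some v ∧ p = mkCyc p.dropLast := by
  obtain ⟨hch, hh, hl, hlen, hnd⟩ := h
  have hpne : p ≠ [] := by rintro rfl; simp at hh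
  have hdne : p.dropLast ≠ [] := by
    have := List.length_dropLast (xs := p); intro h; rw [h] at this; simp at this; omega
  have hsplit : p = p.dropLast ++ [p.getLast hpne] := (List.dropLast_append_getLast hpne).symm
  have hgl : p.getLast hpne = v := by
    have := List.getLast?_eq_getLast hpne; rw [hl] at this; exact (Option.some_inj.1 this.symm)
  have hhd : p.dropLast.head? = some v := by
    obtain ⟨a, t, hat⟩ := List.exists_cons_of_ne_nil hdne
    have : p.head? = p.dropLast.head? := by
      conv_lhs => rw [hsplit]
      rw [hat]; rfl
    rw [← this, hh]
  have hmk : p = mkCyc p.dropLast := by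
    have : p.dropLast.take 1 = [v] := by
      obtain ⟨a, t, hat⟩ := List.exists_cons_of_ne_nil hdne
      rw [hat]; rw [hat] at hhd; simp at hhd; simp [hhd]
    rw [mkCyc, this]
    conv_lhs => rw [hsplit, hgl]
  exact ⟨⟨hdne, hnd, hmk ▸ hch⟩, hhd, hmk⟩

theorem pathWt_cons_cons (w : α → α → ℝ) (a b : α) (l : List α) :
    pathWt w (a :: b :: l) = w a b + pathWt w (b :: l) := by
  simp [pathWt]

theorem pathWt_nil (w : α → α → ℝ) : pathWt w ([] : List α) = 0 := by simp [pathWt]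

theorem pathWt_single (w : α → α → ℝ) (a : α) : pathWt w [a] = 0 := by simp [pathWt]

theorem pathWt_concat (w : α → α → ℝ) (b : α) : ∀ (l : List α),
    pathWt w (l ++ [b]) = pathWt w l + ((l.getLast?.map fun a => w a b).getD 0)
  | [] => by simp [pathWt]
  | [a] => by simp [pathWt_cons_cons, pathWt_single, pathWt]
  | a :: c :: l => by
    have ih := pathWt_concat w b (c :: l)
    simp only [List.cons_append] at ih ⊢
    rw [pathWt_cons_cons, pathWt_cons_cons, ih, List.getLast?_cons_cons]
    ring

theorem getLast?_cons_append_single (b a : α) (t' : List α) :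
    (b :: (t' ++ [a])).getLast? = some a := by
  rw [show b :: (t' ++ [a]) = (b :: t') ++ [a] by simp, List.getLast?_append]; rfl

theorem rotate_one_chain {a : α} {t : List α} (h : List.Chain' Adj (mkCyc (a :: t))) :
    List.Chain' Adj (mkCyc (t ++ [a])) := by
  cases t with
  | nil => simpa [mkCyc] using h
  | cons b t' =>
    rw [mkCyc_cons] at h
    simp only [List.cons_append] at h
    rw [List.Chain', List.isChain_cons_cons] at h
    obtain ⟨hab, h2⟩ := h
    rw [show (b :: t') ++ [a] = b :: (t' ++ [a]) by simp, mkCyc_cons,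
      show b :: (t' ++ [a] ++ [b]) = (b :: (t' ++ [a])) ++ [b] by simp, List.Chain', List.isChain_append]
    refine ⟨h2, List.isChain_singleton _, ?_⟩
    intro z hz y hy
    simp at hy
    rw [getLast?_cons_append_single] at hz
    simp at hz
    subst hz; subst hy; exact hab

theorem rotate_one_wt (w : α → α → ℝ) {a : α} {t : List α} :
    pathWt w (mkCyc (t ++ [a])) = pathWt w (mkCyc (a :: t)) := by
  cases t with
  | nil => rfl
  | cons b t' =>
    rw [mkCyc_cons, show (b :: t') ++ [a] = b :: (t' ++ [a]) by simp, mkCyc_cons,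
      show b :: (t' ++ [a] ++ [b]) = (b :: (t' ++ [a])) ++ [b] by simp,
      pathWt_concat, getLast?_cons_append_single]
    rw [pathWt_cons_cons]
    simp [add_comm]

theorem rotate_chain (n : ℕ) : ∀ {l : List α}, List.Chain' Adj (mkCyc l) →
    List.Chain' Adj (mkCyc (l.rotate n)) := by
  induction n with
  | zero => intro l h; simpa using h
  | succ n ih =>
    intro l h
    cases l with
    | nil => simpa using h
    | cons a t =>
      rw [List.rotate_cons_succ]
      exact ih (rotate_one_chain h)

theorem rotate_wt (w : α → α → ℝ) (n : ℕ) : ∀ (l : List α),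
    pathWt w (mkCyc (l.rotate n)) = pathWt w (mkCyc l) := by
  induction n with
  | zero => intro l; simp
  | succ n ih =>
    intro l
    cases l with
    | nil => simp
    | cons a t =>
      rw [List.rotate_cons_succ, ih, rotate_one_wt]

theorem cycOK_rotate {l : List α} (h : CycOK Adj l) (n : ℕ) : CycOK Adj (l.rotate n) := by
  obtain ⟨hne, hnd, hch⟩ := h
  exact ⟨by rwa [ne_eq, List.rotate_eq_nil_iff], List.nodup_rotate.2 hnd, rotate_chain n hch⟩

/-- Canonicalization: rotate a cycle so its head is the minimum. -/
theorem canonicalize [LinearOrder α] {l : List α} (h : CycOK Adj l) (w : α → α → ℝ) :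
    ∃ l', CycOK Adj l' ∧ l'.Perm l ∧
      pathWt w (mkCyc l') = pathWt w (mkCyc l) ∧
      ∃ v, l'.head? = some v ∧ ∀ u ∈ l', v ≤ u := by
  have hne := h.1
  classical
  obtain ⟨m, hm, hmin⟩ : ∃ m ∈ l, ∀ u ∈ l, m ≤ u := by
    have hs : l.toFinset.Nonempty := by
      obtain ⟨a, t, rfl⟩ := List.exists_cons_of_ne_nil hne
      exact ⟨a, by simp⟩
    refine ⟨l.toFinset.min' hs, ?_, ?_⟩
    · have := l.toFinset.min'_mem hs; rwa [List.mem_toFinset] at this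
    · intro u hu; exact l.toFinset.min'_le u (List.mem_toFinset.2 hu)
  obtain ⟨l₁, l₂, rfl⟩ := List.append_of_mem hm
  refine ⟨(l₁ ++ m :: l₂).rotate l₁.length, cycOK_rotate h _, List.rotate_perm _ _, rotate_wt w _ _, m, ?_, ?_⟩
  · rw [List.rotate_eq_drop_append_take (by simp), List.drop_left' (by simp)]
    rfl
  · intro u hu
    exact hmin u ((List.rotate_perm _ _).mem_iff.mp hu)

/-- canonical cycle from cycle data -/
theorem exists_canon [LinearOrder α] {l : List α} (h : CycOK Adj l) (w : α → α → ℝ) :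
    ∃ p, IsCanonCycle Adj p ∧ pathWt w p = pathWt w (mkCyc l) ∧ p.dropLast.Perm l := by
  obtain ⟨l', h', hperm, hwt, v, hv, hmin⟩ := canonicalize h w
  refine ⟨mkCyc l', ⟨v, isCycle_mkCyc h' hv, ?_⟩, hwt, by rwa [mkCyc_dropLast h'.1]⟩
  intro u hu
  exact hmin u ((mem_mkCyc h'.1).mp hu)

/-- canonical cycle to cycle data -/
theorem canon_data [LinearOrder α] {p : List α} (h : IsCanonCycle Adj p) :
    CycOK Adj p.dropLast ∧ p = mkCyc p.dropLast := by
  obtain ⟨v, hc, _⟩ := h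
  obtain ⟨h1, _, h3⟩ := cycle_eq_mkCyc hc
  exact ⟨h1, h3⟩

end CycAux

namespace CycAux
variable {V : Type*} {Adj : V → V → Prop} {x : V} {k : ℕ}

@[simp] theorem adj7_ll {u v : V} : adj7 Adj x k (Sum.inl u) (Sum.inl v) ↔ Adj u v := Iff.rfl
@[simp] theorem adj7_ld {u : V} {j} : adj7 Adj x k (Sum.inl u) (Sum.inr (Sum.inl j)) ↔ u = x := Iff.rfl
@[simp] theorem adj7_le {u : V} {j} : adj7 Adj x k (Sum.inl u) (Sum.inr (Sum.inr j)) ↔ False := Iff.rfl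
@[simp] theorem adj7_dl {i} {v : V} : adj7 Adj x k (Sum.inr (Sum.inl i)) (Sum.inl v) ↔ False := Iff.rfl
@[simp] theorem adj7_dd {i i'} : adj7 Adj x k (Sum.inr (Sum.inl i)) (Sum.inr (Sum.inl i')) ↔ False := Iff.rfl
@[simp] theorem adj7_de {i j} : adj7 Adj x k (Sum.inr (Sum.inl i)) (Sum.inr (Sum.inr j)) ↔ i = j := Iff.rfl
@[simp] theorem adj7_el {i} {v : V} : adj7 Adj x k (Sum.inr (Sum.inr i)) (Sum.inl v) ↔ v = x := Iff.rfl
@[simp] theorem adj7_ed {i j} : adj7 Adj x k (Sum.inr (Sum.inr i)) (Sum.inr (Sum.inl j)) ↔ False := Iff.rfl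
@[simp] theorem adj7_ee {i j} : adj7 Adj x k (Sum.inr (Sum.inr i)) (Sum.inr (Sum.inr j)) ↔ False := Iff.rfl

variable (w : V → V → ℝ)
@[simp] theorem wt7_ll (u v : V) : wt7 w k (Sum.inl u) (Sum.inl v) = w u v := rfl
@[simp] theorem wt7_lr (u : V) (z) : wt7 w k (Sum.inl u) (Sum.inr z) = 0 := rfl
@[simp] theorem wt7_rl (z) (v : V) : wt7 w k (Sum.inr z) (Sum.inl v) = 0 := rfl
@[simp] theorem wt7_rr (z z') : wt7 w k (Sum.inr z) (Sum.inr z') = 0 := rfl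

end CycAux

namespace CycAux
section Tri
variable {V : Type*} {Adj : V → V → Prop} {x : V} {k : ℕ}
  [LinearOrder (V ⊕ (Fin (k-1) ⊕ Fin (k-1)))]

local notation "α7" => (V ⊕ (Fin (k-1) ⊕ Fin (k-1)))

/-- canonical rotation of the triangle x → d_j → e_j → x -/
def triD (x : V) (k : ℕ) [LinearOrder (V ⊕ (Fin (k-1) ⊕ Fin (k-1)))] (j : Fin (k-1)) :
    List (V ⊕ (Fin (k-1) ⊕ Fin (k-1))) :=
  if (Sum.inl x : V ⊕ (Fin (k-1) ⊕ Fin (k-1))) ≤ Sum.inr (Sum.inl j) ∧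
      (Sum.inl x : V ⊕ (Fin (k-1) ⊕ Fin (k-1))) ≤ Sum.inr (Sum.inr j) then
    [Sum.inl x, Sum.inr (Sum.inl j), Sum.inr (Sum.inr j)]
  else if (Sum.inr (Sum.inl j) : V ⊕ (Fin (k-1) ⊕ Fin (k-1))) ≤ Sum.inr (Sum.inr j) then
    [Sum.inr (Sum.inl j), Sum.inr (Sum.inr j), Sum.inl x]
  else [Sum.inr (Sum.inr j), Sum.inl x, Sum.inr (Sum.inl j)]

theorem triD_cases (j : Fin (k-1)) :
    triD x k j = [Sum.inl x, Sum.inr (Sum.inl j), Sum.inr (Sum.inr j)] ∨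
    triD x k j = [Sum.inr (Sum.inl j), Sum.inr (Sum.inr j), Sum.inl x] ∨
    triD x k j = [Sum.inr (Sum.inr j), Sum.inl x, Sum.inr (Sum.inl j)] := by
  unfold triD; split_ifs <;> simp

theorem triD_ne_nil (j : Fin (k-1)) : triD x k j ≠ [] := by
  rcases triD_cases (x := x) (k := k) j with h | h | h <;> rw [h] <;> simp

theorem triD_min (j : Fin (k-1)) :
    ∃ v : α7, (triD x k j).head? = some v ∧ ∀ u ∈ triD x k j, v ≤ u := by
  set x' : α7 := Sum.inl x with hx'
  set d : α7 := Sum.inr (Sum.inl j) with hd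
  set e : α7 := Sum.inr (Sum.inr j) with he
  unfold triD
  split_ifs with h1 h2
  · refine ⟨x', rfl, ?_⟩
    rintro u hu; simp only [List.mem_cons, List.mem_singleton, List.not_mem_nil, or_false] at hu
    rcases hu with rfl | rfl | rfl
    exacts [le_refl _, h1.1, h1.2]
  · refine ⟨d, rfl, ?_⟩
    have hdx : d ≤ x' := by
      rcases not_and_or.mp h1 with h | h
      · exact le_of_lt (lt_of_not_ge h)
      · exact le_trans h2 (le_of_lt (lt_of_not_ge h))
    rintro u hu; simp only [List.mem_cons, List.mem_singleton, List.not_mem_nil, or_false] at hu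
    rcases hu with rfl | rfl | rfl
    exacts [le_refl _, h2, hdx]
  · refine ⟨e, rfl, ?_⟩
    have hed : e ≤ d := le_of_lt (lt_of_not_ge h2)
    have hex : e ≤ x' := by
      rcases not_and_or.mp h1 with h | h
      · exact le_trans hed (le_of_lt (lt_of_not_ge h))
      · exact le_of_lt (lt_of_not_ge h)
    rintro u hu; simp only [List.mem_cons, List.mem_singleton, List.not_mem_nil, or_false] at hu
    rcases hu with rfl | rfl | rfl
    exacts [le_refl _, hex, hed]

theorem triD_cycOK (j : Fin (k-1)) : CycOK (adj7 Adj x k) (triD x k j) := by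
  rcases triD_cases (x := x) (k := k) j with h | h | h <;>
    rw [h] <;>
    exact ⟨by simp, by simp, by simp [mkCyc, List.Chain', List.isChain_cons_cons]⟩

theorem triD_canon (j : Fin (k-1)) : IsCanonCycle (adj7 Adj x k) (mkCyc (triD x k j)) := by
  obtain ⟨v, hv, hmin⟩ := triD_min (x := x) (k := k) j
  refine ⟨v, isCycle_mkCyc (triD_cycOK j) hv, ?_⟩
  intro u hu
  exact hmin u ((mem_mkCyc (triD_ne_nil j)).mp hu)

theorem triD_wt (w : V → V → ℝ) (j : Fin (k-1)) :
    pathWt (wt7 w k) (mkCyc (triD x k j)) = 0 := by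
  rcases triD_cases (x := x) (k := k) j with h | h | h <;>
    rw [h] <;> simp [mkCyc, pathWt]

theorem triD_toFinset [DecidableEq (V ⊕ (Fin (k-1) ⊕ Fin (k-1)))] (j : Fin (k-1)) :
    (triD x k j).toFinset =
      {Sum.inl x, Sum.inr (Sum.inl j), Sum.inr (Sum.inr j)} := by
  rcases triD_cases (x := x) (k := k) j with h | h | h <;> rw [h] <;>
    (ext u; simp; try tauto)

theorem triD_mem_d (j : Fin (k-1)) : (Sum.inr (Sum.inl j) : α7) ∈ triD x k j := by
  rcases triD_cases (x := x) (k := k) j with h | h | h <;> rw [h] <;> simp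

theorem triD_sub (j : Fin (k-1)) {u : α7} (hu : u ∈ triD x k j) :
    u = Sum.inl x ∨ u = Sum.inr (Sum.inl j) ∨ u = Sum.inr (Sum.inr j) := by
  rcases triD_cases (x := x) (k := k) j with h | h | h <;> rw [h] at hu <;> simp at hu <;> tauto

theorem triD_inj {j j' : Fin (k-1)} (h : mkCyc (triD x k j) = mkCyc (triD x k j')) : j = j' := by
  have h1 : (Sum.inr (Sum.inl j) : α7) ∈ mkCyc (triD x k j) :=
    (mem_mkCyc (triD_ne_nil j)).mpr (triD_mem_d j)
  rw [h, mem_mkCyc (triD_ne_nil j')] at h1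
  rcases triD_sub j' h1 with h2 | h2 | h2
  · simp at h2
  · simp at h2; exact h2
  · simp at h2

theorem getLast?_cons_ne {β : Type*} {a : β} {t : List β} (h : t ≠ []) :
    (a :: t).getLast? = t.getLast? := by
  cases t with
  | nil => simp at h
  | cons b t' => exact List.getLast?_cons_cons

/-- closing edge of a cycle -/
theorem closing_edge {β : Type*} {R : β → β → Prop} {a : β} {t : List β} (ht : t ≠ [])
    (h : List.Chain' R (mkCyc (a :: t))) : R (t.getLast ht) a := by
  rw [mkCyc_cons, show a :: (t ++ [a]) = (a :: t) ++ [a] by simp, List.Chain', List.isChain_append] at h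
  obtain ⟨-, -, h3⟩ := h
  refine h3 _ ?_ a rfl
  rw [getLast?_cons_ne ht, List.getLast?_eq_getLast ht]
  rfl

theorem forced_d {Adj : V → V → Prop} {t : List (V ⊕ (Fin (k-1) ⊕ Fin (k-1)))} {j : Fin (k-1)}
    (hOK : CycOK (adj7 Adj x k) (Sum.inr (Sum.inl j) :: t)) :
    t = [Sum.inr (Sum.inr j), Sum.inl x] := by
  obtain ⟨-, hnd, hch⟩ := hOK
  have hch' := hch
  rw [mkCyc_cons] at hch'
  cases t with
  | nil => simp [List.Chain', List.isChain_cons_cons] at hch'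
  | cons y t1 =>
    simp only [List.cons_append] at hch'
    rw [List.Chain', List.isChain_cons_cons] at hch'
    obtain ⟨h1, hch'⟩ := hch'
    obtain rfl : y = Sum.inr (Sum.inr j) := by
      rcases y with v | z
      · simp at h1
      · rcases z with i | i
        · simp at h1
        · simp at h1; rw [h1]
    cases t1 with
    | nil => simp [List.isChain_cons_cons] at hch'
    | cons z t2 =>
      simp only [List.cons_append] at hch'
      rw [List.isChain_cons_cons] at hch'
      obtain ⟨h2, hch'⟩ := hch'
      obtain rfl : z = Sum.inl x := by
        rcases z with v | z1
        · simp at h2; rw [h2]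
        · rcases z1 with i | i <;> simp at h2
      cases t2 with
      | nil => rfl
      | cons u t3 =>
        exfalso
        have hne : (Sum.inr (Sum.inr j) :: Sum.inl x :: u :: t3 :
            List (V ⊕ (Fin (k-1) ⊕ Fin (k-1)))) ≠ [] := by simp
        have hcl := closing_edge hne hch
        set g := (Sum.inr (Sum.inr j) :: Sum.inl x :: u :: t3).getLast hne with hg
        have hgx : g = Sum.inl x := by
          rcases hgg : g with v | z1
          · rw [hgg] at hcl; simp at hcl; rw [hcl]
          · rw [hgg] at hcl; rcases z1 with i | i <;> simp at hcl
        have hmem : (Sum.inl x : V ⊕ (Fin (k-1) ⊕ Fin (k-1))) ∈ u :: t3 := by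
          have h4 : (Sum.inr (Sum.inr j) :: Sum.inl x :: u :: t3 :
              List (V ⊕ (Fin (k-1) ⊕ Fin (k-1)))).getLast hne = (u :: t3).getLast (by simp) := by
            rw [List.getLast_cons (by simp), List.getLast_cons (by simp)]
          rw [← hgx, hg, h4]
          exact List.getLast_mem _
        simp only [List.nodup_cons] at hnd
        exact hnd.2.2.1 (by simp [hmem])

theorem e_mem_d {Adj : V → V → Prop} {l : List (V ⊕ (Fin (k-1) ⊕ Fin (k-1)))} {j : Fin (k-1)}
    (hOK : CycOK (adj7 Adj x k) l) (he : (Sum.inr (Sum.inr j) : α7) ∈ l) :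
    (Sum.inr (Sum.inl j) : α7) ∈ l := by
  obtain ⟨l₁, l₂, rfl⟩ := List.append_of_mem he
  have hrot : (l₁ ++ Sum.inr (Sum.inr j) :: l₂).rotate l₁.length
      = Sum.inr (Sum.inr j) :: (l₂ ++ l₁) := by
    rw [List.rotate_eq_drop_append_take (by simp), List.drop_left, List.take_left]
    simp
  have hOK' := cycOK_rotate hOK l₁.length
  rw [hrot] at hOK'
  obtain ⟨-, -, hch⟩ := hOK'
  have htne : l₂ ++ l₁ ≠ [] := by
    intro h
    rw [h] at hch
    simp [mkCyc, List.Chain', List.isChain_cons_cons] at hch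
  have hcl := closing_edge htne hch
  set g := (l₂ ++ l₁).getLast htne with hg
  have hgd : g = Sum.inr (Sum.inl j) := by
    rcases hgg : g with v | z1
    · rw [hgg] at hcl; simp at hcl
    · rw [hgg] at hcl
      rcases z1 with i | i
      · simp at hcl; rw [hcl]
      · simp at hcl
  have hmm : (Sum.inr (Sum.inl j) : α7) ∈ l₂ ++ l₁ := by
    rw [← hgd, hg]; exact List.getLast_mem htne
  simp at hmm ⊢
  tauto

theorem struct {Adj : V → V → Prop} {p : List (V ⊕ (Fin (k-1) ⊕ Fin (k-1)))}
    (hp : IsCanonCycle (adj7 Adj x k) p) :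
    (∃ j, p = mkCyc (triD x k j)) ∨ (∀ u ∈ p, ∃ v, u = Sum.inl v) := by
  classical
  obtain ⟨v, hc, hmin⟩ := hp
  obtain ⟨hOK, hhd, hmk⟩ := cycle_eq_mkCyc hc
  set l := p.dropLast with hl
  rcases Classical.em (∀ u ∈ l, ∃ v, u = Sum.inl v) with hR | hR
  · right
    intro u hu
    exact hR u ((mem_mkCyc hOK.1).mp (hmk ▸ hu))
  · left
    push_neg at hR
    obtain ⟨u, hul, hu⟩ := hR
    have hd : ∃ j, (Sum.inr (Sum.inl j) : α7) ∈ l := by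
      rcases u with v' | z
      · exact absurd rfl (hu v')
      · rcases z with i | i
        · exact ⟨i, hul⟩
        · exact ⟨i, e_mem_d hOK hul⟩
    obtain ⟨j, hdj⟩ := hd
    obtain ⟨l₁, l₂, hsplit⟩ := List.append_of_mem hdj
    have hrot : l.rotate l₁.length = Sum.inr (Sum.inl j) :: (l₂ ++ l₁) := by
      rw [hsplit, List.rotate_eq_drop_append_take (by simp), List.drop_left, List.take_left]
      simp
    have hOK' := cycOK_rotate hOK l₁.length
    rw [hrot] at hOK'
    have hforced := forced_d hOK'
    have hlmin : ∀ u ∈ l, v ≤ u := fun u hu => hmin u (hmk ▸ (mem_mkCyc hOK.1).mpr hu)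
    refine ⟨j, ?_⟩
    rw [hmk]
    congr 1
    set x' : α7 := Sum.inl x with hx'd
    set d : α7 := Sum.inr (Sum.inl j) with hdd
    set e : α7 := Sum.inr (Sum.inr j) with hed
    have hcase : l = [d, e, x'] ∨ l = [x', d, e] ∨ l = [e, x', d] := by
      match l₁, hforced with
      | [], hf => left; rw [hsplit]; simp at hf ⊢; exact hf
      | [a], hf =>
        right; left
        have h5 : l₂ = [e] ∧ a = x' := by
          cases l₂ with
          | nil => simp at hf
          | cons b l₂' =>
            cases l₂' with
            | nil =>
              simp at hf
              exact ⟨by rw [hf.1], hf.2⟩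
            | cons c l₂'' =>
              have h6 := congrArg List.length hf
              simp only [List.length_append, List.length_cons, List.length_nil] at h6
              omega
        rw [hsplit, h5.1, h5.2]
        rfl
      | a :: b :: l₁', hf =>
        right; right
        have hlen : l₂.length + l₁'.length + 2 = 2 := by
          have h6 := congrArg List.length hf
          simp only [List.length_append, List.length_cons, List.length_nil] at h6
          omega
        have hl2 : l₂ = [] := List.eq_nil_of_length_eq_zero (by omega)
        have hl1' : l₁' = [] := List.eq_nil_of_length_eq_zero (by omega)
        rw [hl2, hl1'] at hf
        simp at hf
        rw [hsplit, hl2, hl1', hf.1, hf.2]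
        rfl
    clear_value x' d e
    subst hx'd; subst hdd; subst hed
    rcases hcase with hc1 | hc1 | hc1 <;> rw [hc1] <;> rw [hc1] at hhd hlmin <;>
      simp only [List.head?_cons, Option.some_inj] at hhd <;> subst hhd <;> unfold triD
    · have h1 : (Sum.inr (Sum.inl j) : α7) ≤ Sum.inr (Sum.inr j) := hlmin _ (by simp)
      have h2 : (Sum.inr (Sum.inl j) : α7) ≤ Sum.inl x := hlmin _ (by simp)
      split_ifs with ha hb
      all_goals first
        | rfl
        | exact absurd (le_antisymm ha.1 h2) (by simp)
        | exact absurd h1 hb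
    · have h1 : (Sum.inl x : α7) ≤ Sum.inr (Sum.inl j) := hlmin _ (by simp)
      have h2 : (Sum.inl x : α7) ≤ Sum.inr (Sum.inr j) := hlmin _ (by simp)
      split_ifs with ha hb
      all_goals first
        | rfl
        | exact absurd ⟨h1, h2⟩ ha
    · have h1 : (Sum.inr (Sum.inr j) : α7) ≤ Sum.inr (Sum.inl j) := hlmin _ (by simp)
      have h2 : (Sum.inr (Sum.inr j) : α7) ≤ Sum.inl x := hlmin _ (by simp)
      split_ifs with ha hb
      all_goals first
        | rfl
        | exact absurd (le_antisymm ha.2 h2) (by simp)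
        | exact absurd (le_antisymm hb h1) (by simp)

end Tri
end CycAux

namespace CycAux

section Transfer
variable {β γ : Type*}

theorem pathWt_map (w' : γ → γ → ℝ) (g : β → γ) : ∀ (l : List β),
    pathWt w' (l.map g) = pathWt (fun a b => w' (g a) (g b)) l
  | [] => by simp [pathWt]
  | [a] => by simp [pathWt]
  | a :: b :: l => by
    simp only [List.map_cons]
    rw [pathWt_cons_cons, pathWt_cons_cons, ← List.map_cons (f := g) (a := b) (l := l), pathWt_map w' g (b :: l)]

theorem mkCyc_map (g : β → γ) (l : List β) : mkCyc (l.map g) = (mkCyc l).map g := by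
  simp [mkCyc, List.map_take]

theorem pathWt_nonneg {R : β → β → Prop} {w' : β → β → ℝ}
    (hw : ∀ a b, R a b → 0 ≤ w' a b) : ∀ {p : List β}, List.Chain' R p → 0 ≤ pathWt w' p
  | [], _ => by simp [pathWt]
  | [a], _ => by simp [pathWt]
  | a :: b :: l, h => by
    rw [pathWt_cons_cons]
    rw [List.Chain', List.isChain_cons_cons] at h
    have := pathWt_nonneg hw h.2
    have := hw a b h.1
    linarith

theorem pathWt_pos {R : β → β → Prop} {w' : β → β → ℝ}
    (hw : ∀ a b, R a b → 0 < w' a b) {p : List β} (h : List.Chain' R p)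
    (hlen : 2 ≤ p.length) : 0 < pathWt w' p := by
  match p, hlen with
  | a :: b :: l, _ =>
    rw [pathWt_cons_cons]
    rw [List.Chain', List.isChain_cons_cons] at h
    have h1 := pathWt_nonneg (fun a b hab => le_of_lt (hw a b hab)) h.2
    have h2 := hw a b h.1
    linarith

theorem canon_wt_pos [LinearOrder β] {R : β → β → Prop} {w' : β → β → ℝ}
    (hw : ∀ a b, R a b → 0 < w' a b) {c : List β} (hc : IsCanonCycle R c) :
    0 < pathWt w' c := by
  obtain ⟨v, ⟨hch, -, -, hlen, -⟩, -⟩ := hc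
  exact pathWt_pos hw hch hlen

theorem exists_map_inl {V : Type*} {W : Type*} : ∀ {l : List (V ⊕ W)},
    (∀ u ∈ l, ∃ v, u = Sum.inl v) → ∃ m : List V, l = m.map Sum.inl
  | [], _ => ⟨[], rfl⟩
  | a :: l, h => by
    obtain ⟨v, rfl⟩ := h a (by simp)
    obtain ⟨m, hm⟩ := exists_map_inl (l := l) (fun u hu => h u (List.mem_cons_of_mem _ hu))
    exact ⟨v :: m, by rw [hm]; rfl⟩

end Transfer

section Main
variable {V : Type*} [LinearOrder V] {Adj : V → V → Prop} {w : V → V → ℝ} {x : V} {k : ℕ}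
  [LinearOrder (V ⊕ (Fin (k-1) ⊕ Fin (k-1)))]

/-- embed a canonical cycle of G into G' -/
theorem embed (hc : IsCanonCycle Adj c) :
    ∃ p, IsCanonCycle (adj7 Adj x k) p ∧ pathWt (wt7 w k) p = pathWt w c := by
  obtain ⟨hOK, hmk⟩ := canon_data hc
  have hOK' : CycOK (adj7 Adj x k) (c.dropLast.map Sum.inl) := by
    refine ⟨by rw [ne_eq, List.map_eq_nil_iff]; exact hOK.1, hOK.2.1.map Sum.inl_injective, ?_⟩
    rw [mkCyc_map, List.Chain', List.isChain_map]
    exact hOK.2.2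
  obtain ⟨q, hq, hwt, -⟩ := exists_canon hOK' (wt7 w k)
  refine ⟨q, hq, ?_⟩
  rw [hwt, mkCyc_map, pathWt_map]
  have hww : (fun a b => wt7 w k (Sum.inl a) (Sum.inl b)) = w := rfl
  rw [hww, ← hmk]

theorem struct_wt (hw : ∀ u v, Adj u v → 0 < w u v)
    {p : List (V ⊕ (Fin (k-1) ⊕ Fin (k-1)))}
    (hp : IsCanonCycle (adj7 Adj x k) p) :
    (∃ j, p = mkCyc (triD x k j)) ∨
    (0 < pathWt (wt7 w k) p ∧ ∃ c, IsCanonCycle Adj c ∧ pathWt (wt7 w k) p = pathWt w c) := by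
  rcases struct hp with h | h
  · exact Or.inl h
  · right
    obtain ⟨hOK, hmk⟩ := canon_data hp
    have hall : ∀ u ∈ p.dropLast, ∃ v, u = Sum.inl v := by
      intro u hu
      exact h u (hmk ▸ (mem_mkCyc hOK.1).mpr hu)
    obtain ⟨m, hm⟩ := exists_map_inl hall
    have hOKm : CycOK Adj m := by
      refine ⟨by rintro rfl; exact hOK.1 (by simpa using hm), ?_, ?_⟩
      · have := hOK.2.1; rw [hm] at this; exact this.of_map
      · have := hOK.2.2; rw [hm, mkCyc_map, List.Chain', List.isChain_map] at this; exact this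
    have hwtp : pathWt (wt7 w k) p = pathWt w (mkCyc m) := by
      conv_lhs => rw [hmk, hm]
      rw [mkCyc_map, pathWt_map]
      have hww : (fun a b => wt7 w k (Sum.inl a) (Sum.inl b)) = w := rfl
      rw [hww]
    constructor
    · rw [hwtp]
      refine pathWt_pos hw hOKm.2.2 ?_
      rw [mkCyc_length hOKm.1]
      have := List.length_pos_iff.2 hOKm.1
      omega
    · obtain ⟨c, hc, hcw, -⟩ := exists_canon hOKm w
      exact ⟨c, hc, by rw [hwtp, hcw]⟩

end Main
end CycAux

open CycAux in

/-- The `k-1` smallest-weight simple cycles of `G'` are exactly the `k-1` zero-weight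
triangles `x → d_j → e_j → x`, and the `k`-th simple shortest cycle of `G'` has weight
equal to that of a minimum-weight simple cycle of `G`. -/
theorem stmt7 {V : Type*} [DecidableEq V] [LinearOrder V]
    (Adj : V → V → Prop) (w : V → V → ℝ) (hw : ∀ u v, Adj u v → 0 < w u v)
    (x : V) (k : ℕ) (hk : 3 ≤ k)
    [LinearOrder (V ⊕ (Fin (k-1) ⊕ Fin (k-1)))]
    (hcyc : ∃ (c : List V), IsCanonCycle Adj c)
    (f : Fin k → List (V ⊕ (Fin (k-1) ⊕ Fin (k-1))))
    (hf : KSmallestIn (wt7 w k) {p | IsCanonCycle (adj7 Adj x k) p} f) :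
    (∀ i : Fin k, i.val < k - 1 →
      pathWt (wt7 w k) (f i) = 0 ∧
      ∃ j : Fin (k-1), ((f i).dropLast).toFinset =
        {Sum.inl x, Sum.inr (Sum.inl j), Sum.inr (Sum.inr j)}) ∧
    (∀ j : Fin (k-1), ∃ i : Fin k, i.val < k - 1 ∧ ((f i).dropLast).toFinset =
        {Sum.inl x, Sum.inr (Sum.inl j), Sum.inr (Sum.inr j)}) ∧
    (∃ c : List V, IsCanonCycle Adj c ∧
      (∀ c', IsCanonCycle Adj c' → pathWt w c ≤ pathWt w c') ∧
      pathWt (wt7 w k) (f ⟨k-1, by omega⟩) = pathWt w c) := by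
  classical
  obtain ⟨hfS, hfinj, hfmono, hfmin⟩ := hf
  -- there is a non-triangle index
  have hnontri : ∃ i0 : Fin k, ∀ j, f i0 ≠ mkCyc (triD x k j) := by
    by_contra h
    push_neg at h
    choose g hg using h
    have ginj : Function.Injective g := by
      intro i i' he
      exact hfinj (by rw [hg i, hg i', he])
    have hcard := Fintype.card_le_of_injective g ginj
    simp only [Fintype.card_fin] at hcard
    omega
  obtain ⟨i0, hi0⟩ := hnontri
  have hstr := struct_wt (x := x) (k := k) hw (hfS i0)
  rcases hstr with ⟨j, hj⟩ | ⟨hpos, c0, hc0, hc0w⟩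
  · exact absurd hj (hi0 j)
  -- every triangle is in the range of f
  have htri_range : ∀ j, ∃ i, f i = mkCyc (triD x k j) := by
    intro j
    by_contra h
    push_neg at h
    have hnr : mkCyc (triD x k j) ∉ Set.range f := by
      rintro ⟨i, hi⟩; exact h i hi
    have hle := hfmin _ (triD_canon (Adj := Adj) j) hnr i0
    rw [triD_wt] at hle
    linarith
  choose g hg using htri_range
  have ginj : Function.Injective g := by
    intro j j' he
    exact triD_inj (x := x) (k := k) (by rw [← hg j, ← hg j', he])
  have hgne : ∀ j, g j ≠ i0 := by
    intro j he
    exact hi0 j (by rw [← he, hg j])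
  -- every index other than i0 is a triangle
  have hcov : ∀ i : Fin k, i ≠ i0 → ∃ j, f i = mkCyc (triD x k j) := by
    have hsub : Finset.univ.image g ⊆ Finset.univ.erase i0 := by
      intro i hi
      simp only [Finset.mem_image, Finset.mem_univ, true_and] at hi
      obtain ⟨j, rfl⟩ := hi
      exact Finset.mem_erase.2 ⟨hgne j, Finset.mem_univ _⟩
    have hcard1 : (Finset.univ.image g).card = k - 1 := by
      rw [Finset.card_image_of_injective _ ginj]
      simp
    have hcard2 : (Finset.univ.erase i0).card = k - 1 := by
      rw [Finset.card_erase_of_mem (Finset.mem_univ _)]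
      simp
    have heq : Finset.univ.image g = Finset.univ.erase i0 :=
      Finset.eq_of_subset_of_card_le hsub (by omega)
    intro i hi
    have : i ∈ Finset.univ.image g := by
      rw [heq]; exact Finset.mem_erase.2 ⟨hi, Finset.mem_univ _⟩
    simp only [Finset.mem_image, Finset.mem_univ, true_and] at this
    obtain ⟨j, rfl⟩ := this
    exact ⟨j, hg j⟩
  have hwt0 : ∀ i : Fin k, i ≠ i0 → pathWt (wt7 w k) (f i) = 0 := by
    intro i hi
    obtain ⟨j, hj⟩ := hcov i hi
    rw [hj, triD_wt]
  -- i0 is the last index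
  have hlast : i0 = (⟨k-1, by omega⟩ : Fin k) := by
    by_contra hx
    have hle : i0 ≤ (⟨k-1, by omega⟩ : Fin k) := by
      have := i0.isLt
      exact Fin.le_def.2 (by simp; omega)
    have hm := hfmono hle
    dsimp only at hm
    rw [hwt0 _ (Ne.symm hx)] at hm
    linarith
  refine ⟨?_, ?_, ?_⟩
  · intro i hi
    have hne : i ≠ i0 := by
      rw [hlast]
      intro he
      rw [he] at hi
      simp at hi
    obtain ⟨j, hj⟩ := hcov i hne
    refine ⟨by rw [hj, triD_wt], j, ?_⟩
    rw [hj, mkCyc_dropLast (triD_ne_nil j), triD_toFinset]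
  · intro j
    have hne : g j ≠ i0 := hgne j
    refine ⟨g j, ?_, ?_⟩
    · have := (g j).isLt
      have : (g j).val ≠ k - 1 := by
        intro he
        exact hne (by rw [hlast]; exact Fin.ext he)
      omega
    · rw [hg j, mkCyc_dropLast (triD_ne_nil j), triD_toFinset]
  · refine ⟨c0, hc0, ?_, by rw [← hlast]; exact hc0w⟩
    intro c' hc'
    obtain ⟨p, hpS, hpw⟩ := embed (x := x) (k := k) (w := w) hc'
    have hc'pos : 0 < pathWt w c' := canon_wt_pos hw hc'
    by_cases hr : p ∈ Set.range f
    · obtain ⟨i, rfl⟩ := hr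
      by_cases hii : i = i0
      · refine le_of_eq ?_
        rw [← hc0w, ← hii, hpw]
      · rw [hwt0 i hii] at hpw
        linarith
    · have := hfmin p hpS hr i0
      rw [hc0w, hpw] at this
      exact this
end

section
/- Let G be an undirected graph on vertex set {1,…,n} and x a vertex. For 1 ≤ i ≤ ⌈log₂ n⌉, construct G_i from G by replacing x with two vertices x_{0,i} and x_{1,i}, where each edge {y,x} of G becomes the edge {y, x_{0,i}} if the i-th bit of the label of y is 0 and {y, x_{1,i}} otherwise. Then every simple cycle of G through x appears as a simple path from x_{0,i} to x_{1,i} of the same weight in at least one G_i, namely for any bit position i in which the two neighbors of x on the cycle differ. -/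
/-- Vertices of `G_i`: the vertices of `G` other than `x` (as `Sum.inl y`), plus
`x_{0,i} = Sum.inr false` and `x_{1,i} = Sum.inr true`. -/
abbrev V11 (n : ℕ) := Fin n ⊕ Bool

/-- Adjacency of the undirected graph `G_i`: each edge `{y,x}` of `G` becomes
`{y, x_{b,i}}` where `b` is the `i`-th bit of the label of `y`. -/
def adj11 (n : ℕ) (Adj : Fin n → Fin n → Prop) (x : Fin n) (i : ℕ) :
    V11 n → V11 n → Prop
  | Sum.inl u, Sum.inl v => u ≠ x ∧ v ≠ x ∧ Adj u v
  | Sum.inl y, Sum.inr b => y ≠ x ∧ Adj y x ∧ Nat.testBit y.val i = b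
  | Sum.inr b, Sum.inl y => y ≠ x ∧ Adj x y ∧ Nat.testBit y.val i = b
  | Sum.inr _, Sum.inr _ => False

/-- Weights of `G_i`, inherited from `G`. -/
def wt11 (n : ℕ) (w : Fin n → Fin n → ℝ) (x : Fin n) : V11 n → V11 n → ℝ
  | Sum.inl u, Sum.inl v => w u v
  | Sum.inl y, Sum.inr _ => w y x
  | Sum.inr _, Sum.inl y => w x y
  | Sum.inr _, Sum.inr _ => 0

private lemma pathWt_cc {α : Type*} (w : α → α → ℝ) (a b : α) (l : List α) :
    pathWt w (a :: b :: l) = w a b + pathWt w (b :: l) := by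
  simp [pathWt]

private lemma pathWt_concat {α : Type*} (w : α → α → ℝ) :
    ∀ (l : List α) (a b : α),
      pathWt w (a :: l ++ [b]) = pathWt w (a :: l) + w ((a :: l).getLast (by simp)) b
  | [], a, b => by simp [pathWt]
  | c :: l, a, b => by
    have h := pathWt_concat w l c b
    simp only [List.cons_append] at h ⊢
    rw [pathWt_cc, pathWt_cc, h,
      show ((a :: c :: l).getLast (by simp)) = (c :: l).getLast (by simp) from
        List.getLast_cons _]
    ring

private lemma pathWt_reverse {α : Type*} (w : α → α → ℝ) (hw : ∀ u v, w u v = w v u) :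
    ∀ l : List α, pathWt w l.reverse = pathWt w l
  | [] => rfl
  | [a] => rfl
  | a :: b :: l => by
    have h1 : (a :: b :: l).reverse = (b :: l).reverse ++ [a] := by simp
    obtain ⟨c, l', h⟩ : ∃ c l', (b :: l).reverse = c :: l' := by
      cases hrev : (b :: l).reverse with
      | nil => exact absurd hrev (by simp)
      | cons c l' => exact ⟨c, l', rfl⟩
    have hgl : (c :: l').getLast (by simp) = b := by
      have h2 := List.getLast?_reverse (l := b :: l)
      rw [h, List.getLast?_eq_getLast (l := c :: l') (by simp)] at h2
      simpa using h2
    rw [h1, h, pathWt_concat, hgl, ← h, pathWt_reverse w hw (b :: l), pathWt_cc, hw b a]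
    ring

private lemma pathWt_inl (n : ℕ) (w : Fin n → Fin n → ℝ) (x : Fin n) :
    ∀ (l : List (Fin n)) (a : Fin n) (b' : Bool),
      pathWt (wt11 n w x) ((a :: l).map Sum.inl ++ [Sum.inr b']) = pathWt w (a :: (l ++ [x]))
  | [], a, b' => by simp [pathWt, wt11]
  | c :: l, a, b' => by
    have h := pathWt_inl n w x l c b'
    simp only [List.map_cons, List.cons_append] at h ⊢
    rw [pathWt_cc, pathWt_cc, h]
    rfl

private lemma chain_inl (n : ℕ) (Adj : Fin n → Fin n → Prop) (x : Fin n) (i : ℕ) :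
    ∀ (l : List (Fin n)) (a : Fin n), a ≠ x → (∀ z ∈ l, z ≠ x) →
      List.Chain' Adj (a :: l) → Adj ((a :: l).getLast (by simp)) x →
      Nat.testBit ((a :: l).getLast (by simp)).val i = true →
      List.Chain' (adj11 n Adj x i) ((a :: l).map Sum.inl ++ [Sum.inr true])
  | [], a, hax, _, _, hadj, hbit => by
    simp only [List.map_cons, List.map_nil, List.cons_append, List.nil_append]
    refine List.isChain_cons_cons.2 ⟨⟨hax, by simpa using hadj, by simpa using hbit⟩, ?_⟩
    exact List.isChain_singleton _
  | c :: l, a, hax, hmem, hch, hadj, hbit => by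
    have hcx : c ≠ x := hmem c (by simp)
    have ih := chain_inl n Adj x i l c hcx (fun z hz => hmem z (by simp [hz]))
      (List.isChain_cons_cons.1 hch).2 (by simpa [List.getLast_cons] using hadj)
      (by simpa [List.getLast_cons] using hbit)
    simp only [List.map_cons, List.cons_append] at ih ⊢
    exact List.isChain_cons_cons.2 ⟨⟨hax, hcx, (List.isChain_cons_cons.1 hch).1⟩, ih⟩

private lemma chain_tail {α : Type*} {R : α → α → Prop} {b : α} :
    ∀ (l : List α) (a : α), List.Chain' R (a :: l ++ [b]) →
      List.Chain' R (a :: l) ∧ R ((a :: l).getLast (by simp)) b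
  | [], a, h => by
    simp only [List.cons_append, List.nil_append] at h
    exact ⟨List.isChain_singleton a, by simpa using (List.isChain_cons_cons.1 h).1⟩
  | c :: l, a, h => by
    simp only [List.cons_append] at h
    have h' := chain_tail l c (by exact (List.isChain_cons_cons.1 h).2)
    exact ⟨List.isChain_cons_cons.2 ⟨(List.isChain_cons_cons.1 h).1, h'.1⟩,
      by simpa [List.getLast_cons] using h'.2⟩

private lemma core (n : ℕ) (Adj : Fin n → Fin n → Prop) (x : Fin n)
    (w : Fin n → Fin n → ℝ) (i : ℕ) (m : List (Fin n)) (hm : m ≠ [])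
    (hnx : ∀ z ∈ m, z ≠ x) (hnd : m.Nodup) (hch : m.Chain' Adj)
    (hxy : Adj x (m.head hm)) (hyx : Adj (m.getLast hm) x)
    (hb0 : Nat.testBit (m.head hm).val i = false)
    (hb1 : Nat.testBit (m.getLast hm).val i = true) :
    ∃ q : List (V11 n), IsSimplePath (adj11 n Adj x i) (Sum.inr false) (Sum.inr true) q ∧
      pathWt (wt11 n w x) q = pathWt w (x :: (m ++ [x])) := by
  obtain ⟨a, l, rfl⟩ : ∃ a l, m = a :: l := by
    cases m with
    | nil => exact absurd rfl hm
    | cons a l => exact ⟨a, l, rfl⟩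
  have hax : a ≠ x := hnx a (by simp)
  refine ⟨Sum.inr false :: (a :: l).map Sum.inl ++ [Sum.inr true], ⟨?_, by simp, ?_, ?_⟩, ?_⟩
  · -- Chain'
    have hc := chain_inl n Adj x i l a hax (fun z hz => hnx z (by simp [hz])) hch hyx hb1
    simp only [List.map_cons, List.cons_append] at hc ⊢
    exact List.isChain_cons_cons.2 ⟨⟨hax, hxy, hb0⟩, hc⟩
  · -- getLast?
    exact List.getLast?_concat
  · -- Nodup
    refine List.Nodup.append ?_ (by simp) ?_
    · exact List.nodup_cons.2 ⟨by simp, hnd.map Sum.inl_injective⟩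
    · intro z hz1 hz2
      simp only [List.mem_singleton] at hz2
      subst hz2
      simp at hz1
  · -- pathWt
    have h := pathWt_inl n w x l a true
    simp only [List.map_cons, List.cons_append] at h ⊢
    rw [pathWt_cc, pathWt_cc, h]
    rfl

/-- Every simple cycle of the undirected graph `G` through `x` appears as a simple path of
the same weight from `x_{0,i}` to `x_{1,i}` in `G_i`, for any bit position `i` in which
the two neighbors of `x` on the cycle differ (and some such `i < ⌈log₂ n⌉` exists). -/
theorem stmt11 (n : ℕ) (Adj : Fin n → Fin n → Prop) (hsym : ∀ u v, Adj u v ↔ Adj v u)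
    (w : Fin n → Fin n → ℝ) (hwsym : ∀ u v, w u v = w v u) (hw : ∀ u v, 0 ≤ w u v)
    (x : Fin n) (c : List (Fin n)) (hc : IsSimpleCycleThrough Adj x c)
    (y y' : Fin n) (hy : c.tail.head? = some y) (hy' : c.dropLast.getLast? = some y')
    (hyy : y ≠ y') :
    (∃ i, i < Nat.clog 2 n ∧ Nat.testBit y.val i ≠ Nat.testBit y'.val i) ∧
    (∀ i : ℕ, Nat.testBit y.val i ≠ Nat.testBit y'.val i →
      ∃ q : List (V11 n), IsSimplePath (adj11 n Adj x i) (Sum.inr false) (Sum.inr true) q ∧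
        pathWt (wt11 n w x) q = pathWt w c) := by
  have hval : y.val ≠ y'.val := fun h => hyy (Fin.val_injective h)
  constructor
  · -- existence of a differing bit below clog 2 n
    by_contra hcon
    push_neg at hcon
    apply hval
    apply Nat.eq_of_testBit_eq
    intro j
    by_cases hj : j < Nat.clog 2 n
    · exact hcon j hj
    · have hpow : (n : ℕ) ≤ 2 ^ j :=
        le_trans (Nat.le_pow_clog one_lt_two n)
          (Nat.pow_le_pow_right (by norm_num) (le_of_not_gt hj))
      rw [Nat.testBit_eq_false_of_lt (lt_of_lt_of_le y.isLt hpow),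
        Nat.testBit_eq_false_of_lt (lt_of_lt_of_le y'.isLt hpow)]
  · -- the main construction
    intro i hbit
    obtain ⟨hch, hhead, hlast, hlen, hnd⟩ := hc
    obtain ⟨t, rfl⟩ : ∃ t, c = x :: t := by
      cases c with
      | nil => simp at hhead
      | cons a t =>
        simp only [List.head?_cons, Option.some.injEq] at hhead
        subst hhead; exact ⟨t, rfl⟩
    have ht : t ≠ [] := by
      cases t with
      | nil => simp at hlen
      | cons a t => simp
    have h1 : t.getLast ht = x := by
      have h2 := List.getLast?_eq_getLast (l := x :: t) (by simp)
      rw [hlast, List.getLast_cons ht] at h2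
      exact (Option.some.injEq _ _ ▸ h2).symm
    obtain ⟨m, rfl⟩ : ∃ m, t = m ++ [x] := by
      refine ⟨t.dropLast, ?_⟩
      rw [← h1]
      exact (List.dropLast_append_getLast ht).symm
    have hdl : (x :: (m ++ [x])).dropLast = x :: m := by
      rw [← List.cons_append, List.dropLast_concat]
    rw [hdl] at hnd
    have hm : m ≠ [] := by
      rintro rfl
      simp only [List.nil_append, List.tail_cons, List.head?_cons, Option.some.injEq] at hy
      rw [hdl] at hy'
      simp only [List.nil_append, List.getLast?_singleton, Option.some.injEq] at hy'
      exact hyy (hy ▸ hy' ▸ rfl)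
    obtain ⟨a, l, rfl⟩ : ∃ a l, m = a :: l := by
      cases m with
      | nil => exact absurd rfl hm
      | cons a l => exact ⟨a, l, rfl⟩
    have hya : a = y := by
      simp only [List.cons_append, List.tail_cons, List.head?_cons, Option.some.injEq] at hy
      exact hy
    subst hya
    have hy'g : (a :: l).getLast (by simp) = y' := by
      rw [hdl, List.getLast?_cons_cons, List.getLast?_eq_getLast (l := a :: l) (by simp)] at hy'
      simpa using hy'
    have hxm : x ∉ a :: l := (List.nodup_cons.1 hnd).1
    have hmnd : (a :: l).Nodup := (List.nodup_cons.1 hnd).2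
    have hnx : ∀ z ∈ a :: l, z ≠ x := fun z hz hzx => hxm (hzx ▸ hz)
    have hxa : Adj x a := by
      simp only [List.cons_append] at hch
      exact (List.isChain_cons_cons.1 hch).1
    have hchrest : List.Chain' Adj ((a :: l) ++ [x]) := by
      simp only [List.cons_append] at hch ⊢
      exact (List.isChain_cons_cons.1 hch).2
    obtain ⟨hchm, hlx⟩ := chain_tail l a hchrest
    cases hba : Nat.testBit a.val i with
    | false =>
      have hba' : Nat.testBit y'.val i = true := by
        rw [hba] at hbit
        cases h : Nat.testBit y'.val i with
        | false => exact absurd h.symm hbit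
        | true => rfl
      exact core n Adj x w i (a :: l) (by simp) hnx hmnd hchm hxa hlx hba
        (by rw [show (a :: l).getLast (by simp) = y' from hy'g]; exact hba')
    | true =>
      have hba' : Nat.testBit y'.val i = false := by
        rw [hba] at hbit
        cases h : Nat.testBit y'.val i with
        | false => rfl
        | true => exact absurd h.symm hbit
      have hrne : (a :: l).reverse ≠ [] := by simp
      have hrhead : (a :: l).reverse.head hrne = (a :: l).getLast (by simp) :=
        List.head_reverse hrne
      have hrlast : (a :: l).reverse.getLast hrne = a := List.getLast_reverse hrne
      obtain ⟨q, hq1, hq2⟩ := core n Adj x w i ((a :: l).reverse) hrne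
        (fun z hz => hnx z (List.mem_reverse.1 hz))
        (List.nodup_reverse.2 hmnd)
        (List.isChain_reverse.2 (hchm.imp fun u v huv => (hsym u v).1 huv))
        (by rw [hrhead, hy'g]; exact (hsym y' x).1 (hy'g ▸ hlx))
        (by rw [hrlast]; exact (hsym x a).1 hxa)
        (by rw [hrhead, hy'g]; exact hba')
        (by rw [hrlast]; exact hba)
      refine ⟨q, hq1, ?_⟩
      rw [hq2, show (x :: ((a :: l).reverse ++ [x])) = (x :: ((a :: l) ++ [x])).reverse by simp,
        pathWt_reverse w hwsym]
end

section
/- Let G=(V,E) be a directed graph with positive edge weights and let x,y be distinct vertices with at least k simple paths from x to y. Suppose the k−1 smallest-weight simple x-y paths all share the first edge (x,a), but not all of the k smallest do. Then the k-th smallest-weight simple x-y path is a shortest simple x-y path whose first edge differs from (x,a); in particular it belongs to the set Q_k(x,y) consisting of the k−1 simple shortest x-y paths together with a shortest simple x-y path not starting with edge (x,a). -/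
/-- If the `k-1` smallest-weight simple `x`–`y` paths all share the first edge `(x,a)` but
the `k`-th does not, then the `k`-th smallest-weight simple `x`–`y` path is a shortest
simple `x`–`y` path whose first edge differs from `(x,a)`; in particular it belongs to
the nearly-`k`-SiSP set `Q_k(x,y)`. -/
theorem stmt19 {V : Type*} [Fintype V] (Adj : V → V → Prop) (w : V → V → ℝ)
    (hw : ∀ u v, 0 < w u v) (x y a : V) (hxy : x ≠ y) (k : ℕ) (hk : 2 ≤ k)
    (hnum : k ≤ {p : List V | IsSimplePath Adj x y p}.ncard)
    (f : Fin k → List V)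
    (hf : KSmallestIn w {p | IsSimplePath Adj x y p} f)
    (hshare : ∀ i : Fin k, i.val < k - 1 → (f i).tail.head? = some a)
    (hlast : (f ⟨k - 1, by omega⟩).tail.head? ≠ some a) :
    (∀ q, IsSimplePath Adj x y q → q.tail.head? ≠ some a →
      pathWt w (f ⟨k - 1, by omega⟩) ≤ pathWt w q) ∧
    f ⟨k - 1, by omega⟩ ∈
      (Set.range (fun i : Fin (k-1) => f ⟨i.val, by omega⟩) ∪
        {q | IsSimplePath Adj x y q ∧ q.tail.head? ≠ some a ∧
          ∀ q', IsSimplePath Adj x y q' → q'.tail.head? ≠ some a →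
            pathWt w q ≤ pathWt w q'}) := by
  have hmin : ∀ q, IsSimplePath Adj x y q → q.tail.head? ≠ some a →
      pathWt w (f ⟨k - 1, by omega⟩) ≤ pathWt w q := by
    intro q hq hqa
    by_cases hr : q ∈ Set.range f
    · obtain ⟨i, hi⟩ := hr
      rcases lt_or_ge i.val (k-1) with h1 | h2
      · exact absurd (hi ▸ hshare i h1) hqa
      · have hik := i.isLt
        have : i = ⟨k-1, by omega⟩ := Fin.ext (by simp only [Fin.val_mk]; omega)
        rw [← hi, this]
    · exact hf.2.2.2 q hq hr _
  refine ⟨hmin, Or.inr ⟨hf.1 _, hlast, hmin⟩⟩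
end
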